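/- (Cover inequality) Let G be a finite bipartite graph and C ⊆ V(G) a vertex cover (every edge has at least one endpoint in C). Then Σ_{v ∈ C} E_G(v) ≥ (1/2) E(G). -/

import Mathlib

open Matrix BigOperators Finset Polynomial

noncomputable def adjMat {V : Type*} [Fintype V] (G : SimpleGraph V) : Matrix V V ℝ :=
  letI := Classical.decRel G.Adj; G.adjMatrix ℝ

noncomputable def absMat {V : Type*} [Fintype V] [DecidableEq V] (A : Matrix V V ℝ) :
    Matrix V V ℝ :=
  let hA := (Matrix.posSemidef_self_mul_conjTranspose A).1
  (hA.eigenvectorUnitary : Matrix V V ℝ) *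
    Matrix.diagonal ((↑) ∘ Real.sqrt ∘ hA.eigenvalues) *
    (star hA.eigenvectorUnitary : Matrix V V ℝ)

/-- The energy of a vertex: the (i,i) entry of |A| = (A Aᴴ)^{1/2}. -/
noncomputable def vertexEnergy {V : Type*} [Fintype V] [DecidableEq V]
    (G : SimpleGraph V) (i : V) : ℝ :=
  absMat (adjMat G) i i

/-- The energy of a graph: the trace of |A| (equivalently the sum of vertex energies). -/
noncomputable def graphEnergy {V : Type*} [Fintype V] [DecidableEq V]
    (G : SimpleGraph V) : ℝ :=
  Matrix.trace (absMat (adjMat G))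

/-!
Let `P` be the diagonal projection onto the independent set `Cᶜ` and `D = 2P - 1` the matching
reflection. Since `P A P = 0`, we get `D A D = A - 2 (P A + A P)`. Writing `|A| = U A = A U` with
`U` orthogonal, this gives `tr (D U D A) = tr (U · D A D) = tr |A| - 4 tr (P |A|)`, and
`|tr (W A)| ≤ tr |A|` holds for every orthogonal `W` (compute the trace in an eigenbasis of `A`).
Hence `tr (P |A|) ≤ tr |A| / 2`, so the vertices outside `C` carry at most half of the energy.
-/

theorem absMat_eq_cfc_sqrt {n : Type*} [Fintype n] [DecidableEq n] (A : Matrix n n ℝ) :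
    absMat A = cfc Real.sqrt (A * Aᴴ) := by
  rw [(posSemidef_self_mul_conjTranspose A).1.cfc_eq]
  unfold absMat IsHermitian.cfc
  simp only [conjTranspose_eq_transpose_of_trivial, RCLike.ofReal_real_eq_id, CompTriple.comp_eq,
    Unitary.conjStarAlgAut_apply]
  rfl

namespace Matrix

variable {n : Type*} [Fintype n] [DecidableEq n]

theorem IsHermitian.absMat_eq_cfc_abs {A : Matrix n n ℝ} (hA : A.IsHermitian) :
    absMat A = cfc (fun x : ℝ => |x|) A := by
  rw [absMat_eq_cfc_sqrt, hA.eq, ← sq, ← cfc_comp_pow Real.sqrt 2 A]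
  simp only [Real.sqrt_sq_eq_abs]

theorem IsHermitian.trace_cfc {A : Matrix n n ℝ} (hA : A.IsHermitian) (f : ℝ → ℝ) :
    trace (cfc f A) = ∑ i, f (hA.eigenvalues i) := by
  rw [hA.cfc_eq, IsHermitian.cfc, Unitary.conjStarAlgAut_apply, trace_mul_cycle,
    Unitary.coe_star_mul_self, one_mul, trace_diagonal]
  rfl

theorem IsHermitian.abs_trace_mul_le_trace_cfc_abs {A W : Matrix n n ℝ} (hA : A.IsHermitian)
    (hW : W ∈ unitaryGroup n ℝ) : |trace (W * A)| ≤ trace (cfc (fun x : ℝ => |x|) A) := by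
  set Q : Matrix n n ℝ := (hA.eigenvectorUnitary : Matrix n n ℝ)
  have hR : star Q * W * Q ∈ unitaryGroup n ℝ :=
    mul_mem (mul_mem (Unitary.star_mem hA.eigenvectorUnitary.2) hW) hA.eigenvectorUnitary.2
  have htrace : trace (W * A) = ∑ i, (star Q * W * Q) i i * hA.eigenvalues i := by
    conv_lhs => rw [hA.spectral_theorem, Unitary.conjStarAlgAut_apply]
    rw [← mul_assoc, ← mul_assoc, trace_mul_comm, ← mul_assoc, ← mul_assoc]
    simp only [trace, RCLike.ofReal_real_eq_id, CompTriple.comp_eq, diag_apply, mul_diagonal]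
    rfl
  rw [htrace, hA.trace_cfc]
  refine (abs_sum_le_sum_abs _ _).trans (sum_le_sum fun i _ => ?_)
  rw [abs_mul]
  exact mul_le_of_le_one_left (abs_nonneg _) (by simpa using entry_norm_bound_of_unitary hR i i)

theorem IsHermitian.exists_unitary_mul_eq_cfc_abs {A : Matrix n n ℝ} (hA : A.IsHermitian) :
    ∃ U ∈ unitaryGroup n ℝ,
      U * A = cfc (fun x : ℝ => |x|) A ∧ A * U = cfc (fun x : ℝ => |x|) A := by
  set f : ℝ → ℝ := fun x => if 0 ≤ x then 1 else -1
  have hf : ContinuousOn f (spectrum ℝ A) := A.finite_real_spectrum.continuousOn f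
  have hUA : cfc f A * A = cfc (fun x : ℝ => |x|) A := by
    have h := cfc_mul f (fun x => x) A
    rw [cfc_id' ℝ A] at h
    rw [← h]
    refine cfc_congr fun x _ => ?_
    unfold f
    split_ifs with hx
    · simp [abs_of_nonneg hx]
    · simp [abs_of_neg (not_le.mp hx)]
  have hcomm : Commute (cfc f A) A := by
    simpa only [cfc_id' ℝ A] using cfc_commute_cfc f (fun x => x) A
  have hU : IsSelfAdjoint (cfc f A) := cfc_predicate f A
  refine ⟨cfc f A, ?_, hUA, hcomm.eq ▸ hUA⟩
  rw [mem_unitaryGroup_iff, hU.star_eq, ← cfc_mul f f A, ← cfc_const_one ℝ A]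
  exact cfc_congr fun x _ => by unfold f; split_ifs <;> norm_num

theorem IsHermitian.trace_mul_cfc_abs_le_half {A P : Matrix n n ℝ} (hA : A.IsHermitian)
    (hP : IsStarProjection P) (hPAP : P * A * P = 0) :
    trace (P * cfc (fun x : ℝ => |x|) A) ≤ trace (cfc (fun x : ℝ => |x|) A) / 2 := by
  set N := cfc (fun x : ℝ => |x|) A
  obtain ⟨U, hU, hUA, hAU⟩ := hA.exists_unitary_mul_eq_cfc_abs
  set D := 2 * P - 1
  have hD : D ∈ unitaryGroup n ℝ := hP.two_mul_sub_one_mem_unitary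
  have hDAD : D * A * D = A - 2 * (P * A + A * P) := by
    have h : D * A * D - (A - 2 * (P * A + A * P)) = 4 * (P * A * P) := by
      simp only [D]
      noncomm_ring
    rwa [hPAP, mul_zero, sub_eq_zero] at h
  have htrace : trace (D * U * D * A) = trace N - 4 * trace (P * N) := by
    calc trace (D * U * D * A) = trace (U * (D * A * D)) := by
          rw [show D * U * D * A = D * (U * D * A) by simp only [mul_assoc], trace_mul_comm,
            show U * D * A * D = U * (D * A * D) by simp only [mul_assoc]]
      _ = trace (U * A) - 2 * (trace (P * (A * U)) + trace (U * A * P)) := by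
          rw [hDAD]
          simp only [mul_sub, mul_add, two_mul, trace_sub, trace_add]
          rw [trace_mul_comm U (P * A), mul_assoc P A U, mul_assoc U A P]
      _ = trace N - 4 * trace (P * N) := by
          rw [hUA, hAU, trace_mul_comm N P]
          ring
  have hbound := (abs_le.mp (hA.abs_trace_mul_le_trace_cfc_abs (mul_mem (mul_mem hD hU) hD))).1
  linarith

theorem isStarProjection_diagonal_ite {R : Type*} [Semiring R] [StarRing R] (s : Finset n) :
    IsStarProjection (diagonal fun i => if i ∈ s then (1 : R) else 0) where
  isIdempotentElem := by
    rw [IsIdempotentElem, diagonal_mul_diagonal]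
    congr 1; ext i; split_ifs <;> simp
  isSelfAdjoint := by
    rw [IsSelfAdjoint, star_eq_conjTranspose, diagonal_conjTranspose]
    congr 1; ext i; simp only [Pi.star_apply]; split_ifs <;> simp

theorem trace_diagonal_ite_mul {R : Type*} [NonAssocSemiring R] (s : Finset n)
    (M : Matrix n n R) :
    trace (diagonal (fun i => if i ∈ s then 1 else 0) * M) = ∑ i ∈ s, M i i := by
  simp [trace, diagonal_mul, Finset.sum_ite_mem]

end Matrix

theorem adjMat_isHermitian {V : Type*} [Fintype V] (G : SimpleGraph V) :
    (adjMat G).IsHermitian := by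
  classical
  rw [IsHermitian, conjTranspose_eq_transpose_of_trivial]
  exact G.isSymm_adjMatrix

theorem SimpleGraph.IsIndepSet.diagonal_ite_mul_adjMat_mul_diagonal_ite {V : Type*} [Fintype V]
    [DecidableEq V] {G : SimpleGraph V} {s : Finset V} (hs : G.IsIndepSet ↑s) :
    diagonal (fun v => if v ∈ s then (1 : ℝ) else 0) * adjMat G *
      diagonal (fun v => if v ∈ s then (1 : ℝ) else 0) = 0 := by
  ext u v
  simp only [diagonal_mul, mul_diagonal, Matrix.zero_apply]
  split_ifs with hu hv
  · have hnadj : ¬ G.Adj u v := fun h => hs hu hv h.ne h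
    simp [adjMat, hnadj]
  all_goals simp

theorem cover_energy_inequality_general {V : Type*} [Fintype V] [DecidableEq V]
    (G : SimpleGraph V) (C : Finset V)
    (hC : ∀ a b : V, G.Adj a b → a ∈ C ∨ b ∈ C) :
    (1 / 2) * graphEnergy G ≤ ∑ v ∈ C, vertexEnergy G v := by
  have hA := adjMat_isHermitian G
  have hindep : G.IsIndepSet ↑Cᶜ := by
    rw [coe_compl]
    exact SimpleGraph.isIndepSet_compl_iff_isVertexCover.mpr fun a b h => hC a b h
  have hhalf := hA.trace_mul_cfc_abs_le_half (isStarProjection_diagonal_ite Cᶜ)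
    hindep.diagonal_ite_mul_adjMat_mul_diagonal_ite
  rw [trace_diagonal_ite_mul, ← hA.absMat_eq_cfc_abs] at hhalf
  have hsplit := sum_add_sum_compl C fun v => absMat (adjMat G) v v
  simp only [graphEnergy, vertexEnergy, trace, diag_apply] at hhalf ⊢
  linarith

/-- cover inequality: for a bipartite graph G and a vertex cover C,
Σ_{v ∈ C} E_G(v) ≥ (1/2)·E(G). -/
theorem cover_energy_inequality {V : Type*} [Fintype V] [DecidableEq V]
    (G : SimpleGraph V) (hG : G.Colorable 2) (C : Finset V)
    (hC : ∀ a b : V, G.Adj a b → a ∈ C ∨ b ∈ C) :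
    (1 / 2) * graphEnergy G ≤ ∑ v ∈ C, vertexEnergy G v :=
  cover_energy_inequality_general G C hC
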